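/- arXiv:1904.04312 — 2 statements merged into one kernel-verified Lean document; each statement's English description precedes it below -/
import Mathlib

section
/- For the Fuss-Catalan numbers FC_s(n) = (1/(sn+1)) * C(sn+1, n), the recurrence FC_s(n+1) = Σ_{k_1+...+k_s = n} Π_{j=1}^s FC_s(k_j) holds for all n ≥ 0, where the sum ranges over all s-tuples of nonnegative integers summing to n. -/
/-- Fuss-Catalan number with parameter `s`: `FC_s(n) = (1/(sn+1)) * C(sn+1, n)`. -/
noncomputable def fussCatalan (s n : ℕ) : ℚ :=
  ((s * n + 1).choose n : ℚ) / (s * n + 1)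

/-- Forest Fuss-Catalan numbers: `Fc s m n = (m/(sn+m)) * C(sn+m, n)` counts forests of
`m` `s`-ary trees with `n` internal nodes in total (with the convention `Fc s 0 0 = 1`). -/
noncomputable def Fc (s m n : ℕ) : ℚ :=
  if m = 0 ∧ n = 0 then 1
  else (m : ℚ) / (s * n + m) * ((s * n + m).choose n : ℚ)

lemma Fc_zero_left (s n : ℕ) : Fc s 0 n = if n = 0 then 1 else 0 := by
  rcases Nat.eq_zero_or_pos n with h | h
  · simp [Fc, h]
  · simp [Fc, h.ne']

lemma Fc_zero_right (s m : ℕ) : Fc s m 0 = 1 := by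
  rcases Nat.eq_zero_or_pos m with h | h
  · simp [Fc, h]
  · have hm : (m : ℚ) ≠ 0 := Nat.cast_ne_zero.mpr h.ne'
    simp [Fc, h.ne', div_self hm]

lemma Fc_one (s n : ℕ) : Fc s 1 n = fussCatalan s n := by
  have h0 : (0:ℚ) < (s:ℚ) * n + 1 := by positivity
  simp only [Fc, fussCatalan]
  rw [if_neg (by omega)]
  push_cast
  field_simp

lemma Fc_top (s : ℕ) (hs : 1 ≤ s) (n : ℕ) : Fc s s n = fussCatalan s (n + 1) := by
  have hmc := Nat.add_one_mul_choose_eq (s * n + s) n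
  have hq : ((s : ℚ) * n + s + 1) * ((s * n + s).choose n : ℚ)
      = ((s * n + s + 1).choose (n + 1) : ℚ) * (n + 1) := by
    exact_mod_cast congrArg (Nat.cast : ℕ → ℚ) hmc
  have ha0 : ((s : ℚ) * n + s) ≠ 0 := by
    have : (1:ℚ) ≤ (s:ℚ) := by exact_mod_cast hs
    positivity
  have ha1 : ((s : ℚ) * n + s + 1) ≠ 0 := by positivity
  have hL : Fc s s n = (s : ℚ) * ((s * n + s).choose n : ℚ) / ((s : ℚ) * n + s) := by
    simp only [Fc]
    rw [if_neg (by omega)]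
    ring
  have hR : fussCatalan s (n + 1)
      = ((s * n + s + 1).choose (n + 1) : ℚ) / ((s : ℚ) * n + s + 1) := by
    simp only [fussCatalan]
    rw [show s * (n + 1) + 1 = s * n + s + 1 by ring]
    push_cast
    ring
  rw [hL, hR, div_eq_div_iff ha0 ha1]
  linear_combination (s : ℚ) * hq

/-- The Pascal-style recurrence for forests: the first tree is either a single leaf, or its
root is internal with `s` subtrees. -/
lemma Fc_rec (s : ℕ) (hs : 1 ≤ s) (m n : ℕ) :
    Fc s (m + 1) (n + 1) = Fc s m (n + 1) + Fc s (m + s) n := by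
  set a : ℕ := s * (n + 1) + m with ha
  have han : n ≤ a := by
    have : n + 1 ≤ s * (n + 1) := Nat.le_mul_of_pos_left _ hs
    omega
  have ha2 : s * n + (m + s) = a := by rw [ha]; ring
  have h1 : ((a + 1).choose (n + 1) : ℚ) = a.choose (n + 1) + a.choose n := by
    rw [Nat.choose_succ_succ' a n]; push_cast; ring
  have h2 : (a.choose (n + 1) : ℚ) * (n + 1) = a.choose n * ((a : ℚ) - n) := by
    have := Nat.choose_succ_right_eq a n
    have := congrArg (Nat.cast : ℕ → ℚ) this
    push_cast [Nat.cast_sub han] at this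
    linarith [this]
  have haq : (a : ℚ) = s * (n + 1) + m := by rw [ha]; push_cast; ring
  have hm0 : Fc s m (n + 1) = (m : ℚ) / a * (a.choose (n + 1)) := by
    simp only [Fc]
    rw [if_neg (by omega)]
    norm_cast
  have hms : Fc s (m + s) n = ((m : ℚ) + s) / a * (a.choose n) := by
    simp only [Fc]
    rw [if_neg (by omega), ha2]
    rw [show ((s:ℚ) * n + (↑(m + s))) = (a : ℚ) by rw [← ha2]; push_cast; ring]
    push_cast; ring
  have hL : Fc s (m + 1) (n + 1) = ((m : ℚ) + 1) / (a + 1) * ((a + 1).choose (n + 1)) := by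
    simp only [Fc]
    rw [if_neg (by omega)]
    rw [show s * (n + 1) + (m + 1) = a + 1 by omega]
    rw [show ((s:ℚ) * (↑(n + 1)) + (↑(m + 1))) = (a : ℚ) + 1 by rw [haq]; push_cast; ring]
    push_cast; ring
  rw [hL, hm0, hms, h1]
  have ha0 : (a : ℚ) ≠ 0 := by
    have : 0 < a := by positivity
    exact_mod_cast this.ne'
  have ha1 : (a : ℚ) + 1 ≠ 0 := by positivity
  field_simp
  linear_combination (s : ℚ) * h2 +
    ((a.choose (n + 1) : ℚ) + (a.choose n : ℚ)) * haq

/-- Convolution with one more tree: `∑_k Fc 1 k * Fc m (n-k) = Fc (m+1) n`. -/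
lemma Cv_eq (s : ℕ) (hs : 1 ≤ s) (n : ℕ) : ∀ m : ℕ,
    ∑ k ∈ Finset.range (n + 1), Fc s 1 k * Fc s m (n - k) = Fc s (m + 1) n := by
  induction n with
  | zero =>
    intro m
    simp [Fc_zero_right]
  | succ n ihn =>
    intro m
    induction m with
    | zero =>
      rw [Finset.sum_eq_single (n + 1)]
      · simp [Fc_zero_right]
      · intro k hk hne
        have hk' : k < n + 2 := Finset.mem_range.mp hk
        have : n + 1 - k ≠ 0 := by omega
        rw [Fc_zero_left, if_neg this, mul_zero]
      · intro h
        exact absurd (Finset.mem_range.mpr (by omega)) h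
    | succ m ihm =>
      have split : ∀ k ∈ Finset.range (n + 1),
          Fc s 1 k * Fc s (m + 1) (n + 1 - k)
            = Fc s 1 k * Fc s m (n + 1 - k) + Fc s 1 k * Fc s (m + s) (n - k) := by
        intro k hk
        have hk' : k ≤ n := by have := Finset.mem_range.mp hk; omega
        have h1 : n + 1 - k = (n - k) + 1 := by omega
        rw [h1, Fc_rec s hs m (n - k), mul_add]
      rw [Finset.sum_range_succ, Finset.sum_congr rfl split, Finset.sum_add_distrib]
      have e1 : ∑ k ∈ Finset.range (n + 1), Fc s 1 k * Fc s m (n + 1 - k)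
          = Fc s (m + 1) (n + 1) - Fc s 1 (n + 1) * Fc s m (n + 1 - (n + 1)) := by
        have := ihm
        rw [Finset.sum_range_succ] at this
        linarith [this]
      rw [e1, ihn (m + s)]
      have := Fc_rec s hs (m + 1) n
      simp only [Nat.sub_self] at *
      rw [Fc_zero_right, Fc_zero_right] at *
      have goalrec : Fc s (m + 1 + 1) (n + 1) = Fc s (m + 1) (n + 1) + Fc s (m + 1 + s) n :=
        Fc_rec s hs (m + 1) n
      rw [show m + s + 1 = m + 1 + s by ring]
      linarith [goalrec]

/-- Peeling off the first coordinate of a sum over `antidiagonalTuple (m+1) n`. -/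
lemma tuple_succ_sum (f : ℕ → ℚ) (m n : ℕ) :
    ∑ t ∈ Finset.Nat.antidiagonalTuple (m + 1) n, ∏ j : Fin (m + 1), f (t j) =
    ∑ p ∈ Finset.HasAntidiagonal.antidiagonal n,
      f p.1 * ∑ t ∈ Finset.Nat.antidiagonalTuple m p.2, ∏ j : Fin m, f (t j) := by
  simp_rw [Finset.mul_sum]
  rw [Finset.sum_sigma']
  refine Finset.sum_nbij'
    (fun t => (⟨(t 0, ∑ i : Fin m, t i.succ), Fin.tail t⟩ :
      (Σ _p : ℕ × ℕ, Fin m → ℕ)))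
    (fun q => Fin.cons q.1.1 q.2) ?_ ?_ ?_ ?_ ?_
  · intro t ht
    rw [Finset.Nat.mem_antidiagonalTuple] at ht
    simp only [Finset.mem_sigma, Finset.HasAntidiagonal.mem_antidiagonal,
      Finset.Nat.mem_antidiagonalTuple]
    constructor
    · rw [← ht, Fin.sum_univ_succ]
    · rfl
  · rintro ⟨⟨a, b⟩, t⟩ hq
    simp only [Finset.mem_sigma, Finset.HasAntidiagonal.mem_antidiagonal,
      Finset.Nat.mem_antidiagonalTuple] at hq
    rw [Finset.Nat.mem_antidiagonalTuple, Fin.sum_univ_succ]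
    simp only [Fin.cons_zero, Fin.cons_succ]
    rw [hq.2]
    exact hq.1
  · intro t ht
    simp only [Fin.cons_self_tail]
  · rintro ⟨⟨a, b⟩, t⟩ hq
    simp only [Finset.mem_sigma, Finset.mem_antidiagonal,
      Finset.Nat.mem_antidiagonalTuple] at hq
    simp only [Fin.cons_zero, Fin.cons_succ, Fin.tail_cons]
    have h2 : (∑ i : Fin m, t i) = b := hq.2
    congr 1
    exact Prod.ext rfl h2
  · intro t ht
    rw [Fin.prod_univ_succ]
    simp only [Fin.tail]

/-- The `m`-fold convolution of Fuss-Catalan numbers gives the forest numbers. -/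
lemma tuple_eq (s : ℕ) (hs : 1 ≤ s) : ∀ m n : ℕ,
    ∑ t ∈ Finset.Nat.antidiagonalTuple m n, ∏ j : Fin m, Fc s 1 (t j) = Fc s m n := by
  intro m
  induction m with
  | zero =>
    intro n
    rcases Nat.eq_zero_or_pos n with h | h
    · subst h
      simp [Fc_zero_right]
    · obtain ⟨k, rfl⟩ := Nat.exists_eq_succ_of_ne_zero h.ne'
      rw [Finset.Nat.antidiagonalTuple_zero_succ, Fc_zero_left]
      simp
  | succ m ihm =>
    intro n
    rw [tuple_succ_sum]
    have : ∀ p ∈ Finset.HasAntidiagonal.antidiagonal n,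
        Fc s 1 p.1 * ∑ t ∈ Finset.Nat.antidiagonalTuple m p.2, ∏ j : Fin m, Fc s 1 (t j)
          = Fc s 1 p.1 * Fc s m p.2 := by
      intro p hp
      rw [ihm p.2]
    rw [Finset.sum_congr rfl this, Finset.Nat.sum_antidiagonal_eq_sum_range_succ_mk]
    exact Cv_eq s hs n m

/-- The Fuss-Catalan recurrence:
`FC_s(n+1) = Σ_{k_1+...+k_s = n} Π_{j=1}^s FC_s(k_j)`. -/
theorem fussCatalan_recurrence (s : ℕ) (hs : 1 ≤ s) (n : ℕ) :
    fussCatalan s (n + 1) =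
      ∑ t ∈ Finset.Nat.antidiagonalTuple s n, ∏ j : Fin s, fussCatalan s (t j) := by
  have : ∑ t ∈ Finset.Nat.antidiagonalTuple s n, ∏ j : Fin s, fussCatalan s (t j)
      = ∑ t ∈ Finset.Nat.antidiagonalTuple s n, ∏ j : Fin s, Fc s 1 (t j) := by
    refine Finset.sum_congr rfl fun t _ => Finset.prod_congr rfl fun j _ => ?_
    rw [Fc_one]
  rw [this, tuple_eq s hs s n, Fc_top s hs n]
end

section
/- Let w = u^k where cop(w) = max{k : ∃ u, w = u^k} is the largest k such that w is a k-th power of a word u. Then for any word w over an alphabet and any positive integer j, cop(w^j) = j · cop(w). -/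
/-!
Write `w = z ^ c` with `c = cop w`; then `w ^ j = z ^ (j * c)`, so `j * c ≤ cop (w ^ j)`.
Conversely, if `w ^ j = v ^ k` then `v ^ k = z ^ (j * c)`, so `v` and `z` commute and hence are
powers `t ^ a`, `t ^ b` of a common word. As `w = t ^ (b * c)`, maximality of `c` gives `b ≤ 1`,
and comparing lengths in `t ^ (a * k) = t ^ (b * j * c)` yields `k ≤ a * k ≤ j * c`.
-/

namespace FreeMonoid

variable {α : Type*}

theorem length_pow (a : FreeMonoid α) (n : ℕ) : (a ^ n).length = n * a.length := by
  induction n with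
  | zero => simp
  | succ n ih => rw [pow_succ, length_mul, ih, Nat.succ_mul]

theorem length_pos {a : FreeMonoid α} (ha : a ≠ 1) : 0 < a.length :=
  Nat.pos_of_ne_zero (mt length_eq_zero.mp ha)

theorem pow_eq_one_iff {a : FreeMonoid α} {n : ℕ} (hn : n ≠ 0) : a ^ n = 1 ↔ a = 1 := by
  simp only [← length_eq_zero, length_pow, mul_eq_zero, hn, false_or]

theorem pow_right_injective {t : FreeMonoid α} (ht : t ≠ 1) :
    Function.Injective (t ^ · : ℕ → FreeMonoid α) := fun p q h => by
  have hl := congrArg length h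
  simp only [length_pow] at hl
  exact Nat.eq_of_mul_eq_mul_right (length_pos ht) hl

theorem le_length_of_eq_pow {w u : FreeMonoid α} {k : ℕ} (hw : w ≠ 1) (h : w = u ^ k) :
    k ≤ w.length := by
  have hu : u ≠ 1 := by
    rintro rfl
    exact hw (by rw [h, one_pow])
  calc k ≤ k * u.length := Nat.le_mul_of_pos_right k (length_pos hu)
    _ = w.length := by rw [h, length_pow]

theorem mul_eq_mul_iff {a b c d : FreeMonoid α} :
    a * b = c * d ↔ (∃ e, c = a * e ∧ b = e * d) ∨ ∃ e, a = c * e ∧ d = e * b :=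
  List.append_eq_append_iff

theorem eq_of_mul_eq_mul_of_length_eq {a b c d : FreeMonoid α} (h : a * b = c * d)
    (hl : a.length = c.length) : a = c :=
  toList.injective (List.append_inj_left h hl)

theorem exists_eq_pow_of_commute {x y : FreeMonoid α} (h : Commute x y) :
    ∃ (t : FreeMonoid α) (k l : ℕ), x = t ^ k ∧ y = t ^ l := by
  rcases eq_or_ne x 1 with rfl | hx
  · exact ⟨y, 0, 1, (pow_zero y).symm, (pow_one y).symm⟩
  rcases eq_or_ne y 1 with rfl | hy
  · exact ⟨x, 1, 0, (pow_one x).symm, (pow_zero x).symm⟩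
  rcases mul_eq_mul_iff.mp h.eq with ⟨e, hxe, hex⟩ | ⟨e, hye, hey⟩
  · obtain ⟨t, k, l, rfl, rfl⟩ := exists_eq_pow_of_commute (hxe.symm.trans hex)
    exact ⟨t, k, k + l, rfl, by rw [hxe, pow_add]⟩
  · obtain ⟨t, k, l, rfl, rfl⟩ := exists_eq_pow_of_commute (hey.symm.trans hye)
    exact ⟨t, k + l, l, by rw [hey, pow_add], rfl⟩
termination_by x.length + y.length
decreasing_by
  all_goals have := length_pos hx; have := length_pos hy
  · rw [hxe, length_mul]; omega
  · rw [hye, length_mul]; omega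

theorem commute_of_pow_eq_pow {x y : FreeMonoid α} {m n : ℕ} (hm : m ≠ 0) (hn : n ≠ 0)
    (h : x ^ m = y ^ n) : Commute x y := by
  have sq_eq : ∀ (z : FreeMonoid α) (k : ℕ), k ≠ 0 → z * z ^ k * z ^ (k - 1) = z ^ k * z ^ k := by
    intro z k hk
    rw [(Commute.self_pow z k).eq, mul_assoc, mul_pow_sub_one hk]
  -- both sides equal `x ^ m * x ^ m`, so the equal-length prefixes `x * y` and `y * x` agree
  have key : x * y * (y ^ (n - 1) * x ^ (m - 1)) = y * x * (x ^ (m - 1) * y ^ (n - 1)) :=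
    calc _ = x * (y * y ^ (n - 1)) * x ^ (m - 1) := by simp only [mul_assoc]
      _ = x * x ^ m * x ^ (m - 1) := by rw [mul_pow_sub_one hn, ← h]
      _ = x ^ m * x ^ m := sq_eq x m hm
      _ = y ^ n * y ^ n := by rw [h]
      _ = y * y ^ n * y ^ (n - 1) := (sq_eq y n hn).symm
      _ = y * (x * x ^ (m - 1)) * y ^ (n - 1) := by rw [mul_pow_sub_one hm, h]
      _ = _ := by simp only [mul_assoc]
  exact eq_of_mul_eq_mul_of_length_eq key (by simp only [length_mul, add_comm])

end FreeMonoid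

/-- The coperiod of a word: the largest `k` such that `w = u^k` for some word `u`. -/
noncomputable def cop {α : Type*} (w : FreeMonoid α) : ℕ :=
  sSup {k : ℕ | ∃ u : FreeMonoid α, w = u ^ k}

section Coperiod

variable {α : Type*} {w : FreeMonoid α}

theorem bddAbove_setOf_exists_eq_pow (hw : w ≠ 1) : BddAbove {k : ℕ | ∃ u, w = u ^ k} :=
  ⟨w.length, by rintro k ⟨u, hu⟩; exact FreeMonoid.le_length_of_eq_pow hw hu⟩

theorem le_cop {u : FreeMonoid α} {k : ℕ} (hw : w ≠ 1) (h : w = u ^ k) : k ≤ cop w :=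
  le_csSup (bddAbove_setOf_exists_eq_pow hw) ⟨u, h⟩

theorem cop_pos (hw : w ≠ 1) : 0 < cop w :=
  le_cop hw (pow_one w).symm

theorem exists_eq_pow_cop (hw : w ≠ 1) : ∃ u, w = u ^ cop w :=
  Nat.sSup_mem (s := {k | ∃ u, w = u ^ k}) ⟨1, w, (pow_one w).symm⟩
    (bddAbove_setOf_exists_eq_pow hw)

theorem le_mul_cop_of_pow_eq_pow {v : FreeMonoid α} {j k : ℕ} (hw : w ≠ 1) (hj : j ≠ 0)
    (h : w ^ j = v ^ k) : k ≤ j * cop w := by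
  rcases eq_or_ne k 0 with rfl | hk
  · exact Nat.zero_le _
  obtain ⟨z, hz⟩ := exists_eq_pow_cop hw
  have hvz : v ^ k = z ^ (j * cop w) := by rw [← h, mul_comm, pow_mul, ← hz]
  obtain ⟨t, a, b, rfl, rfl⟩ := FreeMonoid.exists_eq_pow_of_commute
    (FreeMonoid.commute_of_pow_eq_pow hk (mul_ne_zero hj (cop_pos hw).ne') hvz)
  have hb : b * cop w ≤ cop w := le_cop hw (hz.trans (pow_mul t b _).symm)
  have ht : t ≠ 1 := by
    rintro rfl
    exact hw (by rw [hz, one_pow, one_pow])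
  have ha : a ≠ 0 := by
    rintro rfl
    exact hw ((FreeMonoid.pow_eq_one_iff hj).mp (by rw [h, pow_zero, one_pow]))
  have hab : a * k = b * (j * cop w) :=
    FreeMonoid.pow_right_injective ht (by simpa only [← pow_mul] using hvz)
  calc k ≤ a * k := Nat.le_mul_of_pos_left k (Nat.pos_of_ne_zero ha)
    _ = j * (b * cop w) := by rw [hab, mul_left_comm]
    _ ≤ j * cop w := Nat.mul_le_mul_left j hb

end Coperiod

/-- For every nonempty word `w` and positive integer `j`, `cop(w^j) = j · cop(w)`. -/
theorem cop_pow {α : Type*} (w : FreeMonoid α) (hw : w ≠ 1) (j : ℕ) (hj : 0 < j) :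
    cop (w ^ j) = j * cop w := by
  obtain ⟨z, hz⟩ := exists_eq_pow_cop hw
  refine IsGreatest.csSup_eq ⟨⟨z, by rw [mul_comm, pow_mul, ← hz]⟩, ?_⟩
  rintro k ⟨v, hv⟩
  exact le_mul_cop_of_pow_eq_pow hw hj.ne' hv
end
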